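/- arXiv:2503.12621 — 7 statements merged into one kernel-verified Lean document; each statement's English description precedes it below -/
import Mathlib

section
/- Applying one step of size h = 1 of the Heun–Euler embedded pair to ẋ = −u·x with x₀ = 1 gives the Heun endpoint x₁(u) = 1 − u + u²/2, the embedded explicit-Euler endpoint x̂₁(u) = 1 − u, and hence the embedded error estimate ê(u) = x̂₁(u) − x₁(u) = −u²/2; moreover the discretized cost g(u) = 1 − x₁(u) = u − u²/2 attains its minimum over [0,30] uniquely at u = 30, with g(30) = −420 < 0 = g(0), even though the exact cost 1 − exp(−u) is uniquely minimized over [0,30] at u = 0. -/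
open Set

/-- One step of size `h = 1` of the Heun–Euler pair (`k₁ = f(x₀)`,
`k₂ = f(x₀ + h·k₁)`, `x₁ = x₀ + (h/2)(k₁+k₂)`, `x̂₁ = x₀ + h·k₁`) for `ẋ = -u·x`, `x₀ = 1`,
gives `x₁(u) = 1 - u + u²/2`, `x̂₁(u) = 1 - u`, error estimate `ê(u) = -u²/2`; the discretized
cost `g(u) = 1 - x₁(u) = u - u²/2` is uniquely minimized over `[0,30]` at `u = 30` with
`g(30) = -420 < 0 = g(0)`, while the exact cost `1 - exp(-u)` is uniquely minimized at `u = 0`. -/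
theorem heun_euler_minimal_example :
    (∀ u : ℝ,
      1 + (1/2 : ℝ) * ((-u * 1) + (-u * (1 + 1 * (-u * 1)))) = 1 - u + u^2/2) ∧
    (∀ u : ℝ, 1 + 1 * (-u * 1) = 1 - u) ∧
    (∀ u : ℝ,
      (1 + 1 * (-u * 1)) - (1 + (1/2 : ℝ) * ((-u * 1) + (-u * (1 + 1 * (-u * 1)))))
        = -(u^2)/2) ∧
    (∀ u ∈ Icc (0:ℝ) 30, u ≠ 30 →
      (fun u : ℝ => u - u^2/2) 30 < (fun u : ℝ => u - u^2/2) u) ∧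
    ((fun u : ℝ => u - u^2/2) 30 = -420) ∧
    ((fun u : ℝ => u - u^2/2) 0 = 0) ∧
    ((-420 : ℝ) < 0) ∧
    (∀ u ∈ Icc (0:ℝ) 30, u ≠ 0 →
      (1 - Real.exp (-(0:ℝ))) < 1 - Real.exp (-u)) := by
  refine ⟨fun u => by ring, fun u => by ring, fun u => by ring, ?_, by norm_num, by norm_num,
    by norm_num, ?_⟩
  · rintro u ⟨hu0, hu30⟩ hne
    simp only
    have h30 : u < 30 := lt_of_le_of_ne hu30 hne
    nlinarith [mul_pos (sub_pos.mpr h30) (by linarith : (0:ℝ) < u + 28)]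
  · rintro u ⟨hu0, hu30⟩ hne
    have : Real.exp (-u) < Real.exp (-(0:ℝ)) :=
      Real.exp_lt_exp.mpr (by simp [lt_of_le_of_ne hu0 (Ne.symm hne)])
    linarith
end

section
/- Let 0 < e_max ≤ 3√3/2. Then the regularized discretized cost g(u) = u − u²/2 + (u²/(2·e_max))² is strictly increasing on [0,∞); in particular its unique minimizer over [0,30] is u = 0, so the spurious minimizer at u = 30 of the unregularized cost u − u²/2 is eliminated. -/
open Set

lemma key_ineq (e s : ℝ) (he2 : e^2 ≤ 27/4) (hs : 0 ≤ s) :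
    0 ≤ 8*e^2 - 4*e^2*s + s^3 := by
  rcases le_or_gt s 2 with h | h
  · nlinarith [mul_nonneg (sq_nonneg e) (by linarith : (0:ℝ) ≤ 2 - s), pow_nonneg hs 3]
  · nlinarith [mul_nonneg (sq_nonneg (s-3)) (by linarith : (0:ℝ) ≤ s+6),
      mul_nonneg (by linarith : (0:ℝ) ≤ 27/4 - e^2) (by linarith : (0:ℝ) ≤ s - 2)]

lemma key (e a b : ℝ) (he : 0 < e) (he2 : e^2 ≤ 27/4) (ha : 0 ≤ a) (hab : a < b) :
    a - a^2/2 + (a^2/(2*e))^2 < b - b^2/2 + (b^2/(2*e))^2 := by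
  have h4 : (0:ℝ) < 4*e^2 := by positivity
  have factored : (b - b^2/2 + (b^2/(2*e))^2) - (a - a^2/2 + (a^2/(2*e))^2)
      = ((b-a)*(4*e^2 - 2*e^2*(a+b) + (a+b)*(a^2+b^2)))/(4*e^2) := by
    field_simp; ring
  have h1 := key_ineq e (a+b) he2 (by linarith)
  have h2 : 0 < (a+b) * (b-a)^2 := by
    exact mul_pos (by linarith) (pow_pos (sub_pos.mpr hab) 2)
  have hin : 0 < 4*e^2 - 2*e^2*(a+b) + (a+b)*(a^2+b^2) := by nlinarith
  have := div_pos (mul_pos (sub_pos.mpr hab) hin) h4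
  linarith

/-- For `0 < e_max ≤ 3√3/2`, the regularized discretized cost
`g(u) = u - u²/2 + (u²/(2·e_max))²` is strictly increasing on `[0,∞)`; in particular its unique
minimizer over `[0,30]` is `u = 0`, so the spurious minimizer at `u = 30` of the unregularized
cost `u - u²/2` is eliminated. -/
theorem regularized_cost_strictly_increasing (emax : ℝ)
    (h0 : 0 < emax) (h1 : emax ≤ 3 * Real.sqrt 3 / 2) :
    StrictMonoOn (fun u : ℝ => u - u^2/2 + (u^2/(2*emax))^2) (Ici (0:ℝ)) ∧
    (∀ u ∈ Icc (0:ℝ) 30, u ≠ 0 →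
      (fun u : ℝ => u - u^2/2 + (u^2/(2*emax))^2) 0
        < (fun u : ℝ => u - u^2/2 + (u^2/(2*emax))^2) u) := by
  have hs3 : Real.sqrt 3 ^ 2 = 3 := Real.sq_sqrt (by norm_num)
  have he2 : emax^2 ≤ 27/4 := by
    have h1' : emax^2 ≤ (3 * Real.sqrt 3 / 2)^2 := by
      apply pow_le_pow_left₀ h0.le h1
    nlinarith
  constructor
  · intro a ha b hb hab
    exact key emax a b h0 he2 ha hab
  · intro u hu hne
    have : 0 < u := lt_of_le_of_ne hu.1 (Ne.symm hne)
    simpa using key emax 0 u h0 he2 le_rfl this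
end

section
/- Let e_max > 3√3/2. Then the regularized cost g(u) = u − u²/2 + (u²/(2·e_max))² has a strict local minimizer u† > 0 on (0,∞); equivalently, the derivative g′(u) = 1 − u + u³/e_max² has two distinct positive roots u₁ < u₂, g is strictly decreasing on (u₁,u₂) and strictly increasing on (u₂,∞), so u₂ is a strict local minimizer of g distinct from 0. Hence the regularization fails to produce a monotone cost exactly when e_max exceeds the threshold 3√3/2. -/
/-!
The derivative `g′(u) = 1 - u + u³/e²` of the regularized cost is a cubic with `g′(0) = g′(e) = 1`,
decreasing on `[0, c]` and increasing on `[c, ∞)` for `c = e/√3`. Since `c² = e²/3`, its minimum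
value is `g′(c) = 1 - 2c/3`, which is negative exactly when `e > 3√3/2`. The intermediate value
theorem then gives one root `u₁ ∈ (0, c)` and one root `u₂ ∈ (c, e)`, and the sign pattern of `g′`
makes `g` decrease on `[u₁, u₂]` and increase on `[u₂, ∞)`.
-/

open Set Filter Topology

section Calculus

variable {g g' : ℝ → ℝ}

theorem strictAntiOn_Icc_of_hasDerivAt_neg (hg : ∀ x, HasDerivAt g (g' x) x) {a b : ℝ}
    (hneg : ∀ x ∈ Ioo a b, g' x < 0) : StrictAntiOn g (Icc a b) := by
  refine strictAntiOn_of_hasDerivWithinAt_neg (convex_Icc a b)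
    (fun x _ ↦ (hg x).continuousAt.continuousWithinAt) (fun x _ ↦ (hg x).hasDerivWithinAt) ?_
  rwa [interior_Icc]

theorem strictMonoOn_Ici_of_hasDerivAt_pos (hg : ∀ x, HasDerivAt g (g' x) x) {a : ℝ}
    (hpos : ∀ x, a < x → 0 < g' x) : StrictMonoOn g (Ici a) := by
  refine strictMonoOn_of_hasDerivWithinAt_pos (convex_Ici a)
    (fun x _ ↦ (hg x).continuousAt.continuousWithinAt) (fun x _ ↦ (hg x).hasDerivWithinAt) ?_
  rwa [interior_Ici]

theorem eventually_lt_of_strictAntiOn_Icc_of_strictMonoOn_Ici {f : ℝ → ℝ} {a b : ℝ} (hab : a < b)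
    (hanti : StrictAntiOn f (Icc a b)) (hmono : StrictMonoOn f (Ici b)) :
    ∀ᶠ x in 𝓝[≠] b, f b < f x := by
  filter_upwards [mem_nhdsWithin_of_mem_nhds (Ioi_mem_nhds hab), self_mem_nhdsWithin]
    with x (hax : a < x) (hxb : x ≠ b)
  rcases hxb.lt_or_gt with hlt | hgt
  · exact hanti ⟨hax.le, hlt.le⟩ (right_mem_Icc.2 hab.le) hlt
  · exact hmono self_mem_Ici hgt.le hgt

end Calculus

section Valley

variable {f : ℝ → ℝ} {a c u₁ u₂ : ℝ}

theorem neg_of_mem_Ioo_of_valley (hanti : StrictAntiOn f (Icc a c))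
    (hmono : StrictMonoOn f (Ici c)) (hu₁ : u₁ ∈ Icc a c) (hu₂ : u₂ ∈ Ici c)
    (hf₁ : f u₁ = 0) (hf₂ : f u₂ = 0) {x : ℝ} (hx : x ∈ Ioo u₁ u₂) : f x < 0 := by
  rcases le_total x c with hxc | hcx
  · exact hf₁ ▸ hanti hu₁ ⟨hu₁.1.trans hx.1.le, hxc⟩ hx.1
  · exact hf₂ ▸ hmono hcx hu₂ hx.2

theorem eq_or_eq_of_valley (hanti : StrictAntiOn f (Icc a c))
    (hmono : StrictMonoOn f (Ici c)) (hu₁ : u₁ ∈ Icc a c) (hu₂ : u₂ ∈ Ici c)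
    (hf₁ : f u₁ = 0) (hf₂ : f u₂ = 0) {x : ℝ} (hax : a ≤ x) (hfx : f x = 0) :
    x = u₁ ∨ x = u₂ := by
  rcases le_total x c with hxc | hcx
  · exact .inl (hanti.injOn ⟨hax, hxc⟩ hu₁ (hfx.trans hf₁.symm))
  · exact .inr (hmono.injOn hcx hu₂ (hfx.trans hf₂.symm))

end Valley

/-- The cost `u - u²/2` of one Heun step plus the penalty `(ê(u)/e)²`, `ê(u) = -u²/2`. -/
noncomputable def regCost (e u : ℝ) : ℝ := u - u ^ 2 / 2 + (u ^ 2 / (2 * e)) ^ 2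

noncomputable def regCostDeriv (e u : ℝ) : ℝ := 1 - u + u ^ 3 / e ^ 2

theorem hasDerivAt_regCost (e u : ℝ) : HasDerivAt (regCost e) (regCostDeriv e u) u := by
  have h := ((hasDerivAt_id u).sub ((hasDerivAt_pow 2 u).div_const 2)).add
    (((hasDerivAt_pow 2 u).div_const (2 * e)).pow 2)
  refine h.congr_deriv ?_
  unfold regCostDeriv
  ring

theorem hasDerivAt_regCostDeriv (e u : ℝ) :
    HasDerivAt (regCostDeriv e) (3 * u ^ 2 / e ^ 2 - 1) u := by
  have h := ((hasDerivAt_const u (1 : ℝ)).sub (hasDerivAt_id u)).add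
    ((hasDerivAt_pow 3 u).div_const (e ^ 2))
  refine h.congr_deriv ?_
  ring

section Cubic

variable {e : ℝ}

theorem continuous_regCostDeriv (e : ℝ) : Continuous (regCostDeriv e) := by
  unfold regCostDeriv
  fun_prop

theorem regCostDeriv_zero (e : ℝ) : regCostDeriv e 0 = 1 := by
  simp [regCostDeriv]

theorem regCostDeriv_self (he : e ≠ 0) : regCostDeriv e e = 1 := by
  rw [regCostDeriv, pow_succ, mul_div_cancel_left₀ e (pow_ne_zero 2 he)]
  ring

theorem sq_div_sqrt_three (e : ℝ) : (e / √3) ^ 2 = e ^ 2 / 3 := by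
  rw [div_pow, Real.sq_sqrt zero_le_three]

theorem regCostDeriv_strictAntiOn (he : e ≠ 0) : StrictAntiOn (regCostDeriv e) (Icc 0 (e / √3)) := by
  refine strictAntiOn_Icc_of_hasDerivAt_neg (hasDerivAt_regCostDeriv e) fun x hx ↦ ?_
  have : x ^ 2 < e ^ 2 / 3 := sq_div_sqrt_three e ▸ pow_lt_pow_left₀ hx.2 hx.1.le two_ne_zero
  rw [sub_neg, div_lt_one (by positivity)]
  linarith

theorem regCostDeriv_strictMonoOn (he : 0 < e) : StrictMonoOn (regCostDeriv e) (Ici (e / √3)) := by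
  refine strictMonoOn_Ici_of_hasDerivAt_pos (hasDerivAt_regCostDeriv e) fun x hx ↦ ?_
  have : e ^ 2 / 3 < x ^ 2 :=
    sq_div_sqrt_three e ▸ pow_lt_pow_left₀ hx (by positivity) two_ne_zero
  rw [sub_pos, one_lt_div (by positivity)]
  linarith

theorem regCostDeriv_div_sqrt_three (he : e ≠ 0) :
    regCostDeriv e (e / √3) = 1 - 2 / 3 * (e / √3) := by
  have h : (e / √3) ^ 3 / e ^ 2 = (e / √3) / 3 := by
    rw [pow_succ, sq_div_sqrt_three]
    field_simp
  rw [regCostDeriv, h]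
  ring

theorem regCostDeriv_div_sqrt_three_neg (he : 3 * √3 / 2 < e) :
    regCostDeriv e (e / √3) < 0 := by
  have he₀ : 0 < e := lt_trans (by positivity) he
  have : 3 / 2 < e / √3 := by rwa [lt_div_iff₀ (by positivity), div_mul_eq_mul_div]
  rw [regCostDeriv_div_sqrt_three he₀.ne']
  linarith

theorem exists_regCostDeriv_eq_zero_mem_Ioo_left (he : 3 * √3 / 2 < e) :
    ∃ u ∈ Ioo 0 (e / √3), regCostDeriv e u = 0 := by
  have hc : 0 < e / √3 := div_pos (lt_trans (by positivity) he) (by positivity)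
  refine intermediate_value_Ioo' hc.le (continuous_regCostDeriv e).continuousOn ?_
  rw [regCostDeriv_zero]
  exact ⟨regCostDeriv_div_sqrt_three_neg he, one_pos⟩

theorem exists_regCostDeriv_eq_zero_mem_Ioo_right (he : 3 * √3 / 2 < e) :
    ∃ u ∈ Ioo (e / √3) e, regCostDeriv e u = 0 := by
  have he₀ : 0 < e := lt_trans (by positivity) he
  have hce : e / √3 < e := div_lt_self he₀ (Real.lt_sqrt zero_le_one |>.2 (by norm_num))
  refine intermediate_value_Ioo hce.le (continuous_regCostDeriv e).continuousOn ?_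
  rw [regCostDeriv_self he₀.ne']
  exact ⟨regCostDeriv_div_sqrt_three_neg he, one_pos⟩

end Cubic

/-- For `e_max > 3√3/2`, the regularized cost
`g(u) = u - u²/2 + (u²/(2·e_max))²` (with derivative `g′(u) = 1 - u + u³/e_max²`) has two
distinct positive critical points `u₁ < u₂`, is strictly decreasing on `[u₁,u₂]` and strictly
increasing on `[u₂,∞)`, and `u₂` is a strict local minimizer of `g` distinct from `0`. -/
theorem regularized_cost_spurious_minimizer (emax : ℝ)
    (h1 : 3 * Real.sqrt 3 / 2 < emax) :
    (∀ u : ℝ, HasDerivAt (fun u : ℝ => u - u^2/2 + (u^2/(2*emax))^2)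
      (1 - u + u^3/emax^2) u) ∧
    ∃ u₁ u₂ : ℝ, 0 < u₁ ∧ u₁ < u₂ ∧
      (1 - u₁ + u₁^3/emax^2 = 0) ∧ (1 - u₂ + u₂^3/emax^2 = 0) ∧
      (∀ u : ℝ, 0 < u → 1 - u + u^3/emax^2 = 0 → u = u₁ ∨ u = u₂) ∧
      StrictAntiOn (fun u : ℝ => u - u^2/2 + (u^2/(2*emax))^2) (Icc u₁ u₂) ∧
      StrictMonoOn (fun u : ℝ => u - u^2/2 + (u^2/(2*emax))^2) (Ici u₂) ∧
      (∀ᶠ u in nhdsWithin u₂ {u₂}ᶜ,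
        (fun u : ℝ => u - u^2/2 + (u^2/(2*emax))^2) u₂
          < (fun u : ℝ => u - u^2/2 + (u^2/(2*emax))^2) u) ∧
      u₂ ≠ 0 := by
  have he : 0 < emax := lt_trans (by positivity) h1
  obtain ⟨u₁, hu₁, hf₁⟩ := exists_regCostDeriv_eq_zero_mem_Ioo_left h1
  obtain ⟨u₂, hu₂, hf₂⟩ := exists_regCostDeriv_eq_zero_mem_Ioo_right h1
  have hanti := regCostDeriv_strictAntiOn he.ne'
  have hmono := regCostDeriv_strictMonoOn he
  have hu₁' : u₁ ∈ Icc 0 (emax / √3) := Ioo_subset_Icc_self hu₁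
  have hu₂' : u₂ ∈ Ici (emax / √3) := hu₂.1.le
  have h12 : u₁ < u₂ := hu₁.2.trans hu₂.1
  have hcostAnti : StrictAntiOn (regCost emax) (Icc u₁ u₂) :=
    strictAntiOn_Icc_of_hasDerivAt_neg (hasDerivAt_regCost emax) fun _ hx ↦
      neg_of_mem_Ioo_of_valley hanti hmono hu₁' hu₂' hf₁ hf₂ hx
  have hcostMono : StrictMonoOn (regCost emax) (Ici u₂) :=
    strictMonoOn_Ici_of_hasDerivAt_pos (hasDerivAt_regCost emax) fun _ hx ↦
      hf₂ ▸ hmono hu₂' (hu₂'.trans hx.le) hx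
  exact ⟨hasDerivAt_regCost emax, u₁, u₂, hu₁.1, h12, hf₁, hf₂,
    fun _ hu ↦ eq_or_eq_of_valley hanti hmono hu₁' hu₂' hf₁ hf₂ hu.le, hcostAnti, hcostMono,
    eventually_lt_of_strictAntiOn_Icc_of_strictMonoOn_Ici h12 hcostAnti hcostMono,
    (hu₁.1.trans h12).ne'⟩
end

section
/- The RK4-discretized cost of the minimal example, g(u) = 1 − (1 − u + u²/2 − u³/6 + u⁴/24) = u − u²/2 + u³/6 − u⁴/24, attains its minimum over [0,30] uniquely at the spurious point u = 30, where g(30) = −29670 < 0 = g(0); in particular its minimizer differs from the minimizer u = 0 of the exact cost 1 − exp(−u) on [0,30]. -/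
open Set

/-- The RK4-discretized cost of the minimal example,
`g(u) = u - u²/2 + u³/6 - u⁴/24`, attains its minimum over `[0,30]` uniquely at the spurious
point `u = 30`, with `g(30) = -29670 < 0 = g(0)`; its minimizer differs from the minimizer
`u = 0` of the exact cost `1 - exp(-u)` on `[0,30]`. -/
theorem rk4_discretized_spurious_minimizer :
    (∀ u ∈ Icc (0:ℝ) 30, u ≠ 30 →
      (fun u : ℝ => u - u^2/2 + u^3/6 - u^4/24) 30
        < (fun u : ℝ => u - u^2/2 + u^3/6 - u^4/24) u) ∧
    ((fun u : ℝ => u - u^2/2 + u^3/6 - u^4/24) 30 = -29670) ∧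
    ((fun u : ℝ => u - u^2/2 + u^3/6 - u^4/24) 0 = 0) ∧
    ((-29670 : ℝ) < 0) ∧
    (∀ u ∈ Icc (0:ℝ) 30, u ≠ 0 →
      (1 - Real.exp (-(0:ℝ))) < 1 - Real.exp (-u)) ∧
    ((30 : ℝ) ≠ 0) := by
  refine ⟨?_, by norm_num, by norm_num, by norm_num, ?_, by norm_num⟩
  · intro u ⟨h0, h30⟩ hne
    have hlt : u < 30 := lt_of_le_of_ne h30 hne
    simp only
    nlinarith [mul_pos (sub_pos.mpr hlt) (by nlinarith : (0:ℝ) < u^3 + 26*u^2 + 792*u + 23736), sq_nonneg u]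
  · intro u ⟨h0, _⟩ hne
    have : -u < -0 := by simpa using lt_of_le_of_ne h0 (Ne.symm hne)
    have := Real.exp_lt_exp.mpr this
    linarith
end

section
/- Let R(z) = (1680 + 840z + 180z² + 20z³ + z⁴)/(1680 − 840z + 180z² − 20z³ + z⁴) and define g(u) = 1 − R(−u) for u ∈ [0,30]. Then g(0) = 0, g′(0) = 1 > 0, and g′(30) < 0; hence both u = 0 and u = 30 are strict local minimizers of g relative to [0,30]. In particular, the discretized problem possesses a spurious local minimizer at u = 30 in addition to the correct minimizer u = 0. -/
open Set

/-- Stability function of the 4-stage Gauss–Legendre method (GL8): the (4,4) Padé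
approximant of the exponential. -/
noncomputable def R_GL8 (z : ℝ) : ℝ :=
  (1680 + 840*z + 180*z^2 + 20*z^3 + z^4) / (1680 - 840*z + 180*z^2 - 20*z^3 + z^4)

/-- GL8-discretized cost of the minimal example. -/
noncomputable def g_GL8 (u : ℝ) : ℝ := 1 - R_GL8 (-u)

/-!
Since `R_GL8 z = P z / P (-z)` for the Padé numerator `P`, only the odd part of `P` survives in
`g_GL8 u = (P u - P (-u)) / P u = (1680 u + 40 u³) / P u`, and `P` has no real zeros. The quotient
rule then gives `g′(0) = 1` and a negative `g′(30)`, and a one-sided derivative of the right sign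
at an endpoint makes it a strict local minimizer relative to the interval.
-/

open Filter Topology

section OneSidedDerivative

variable {f : ℝ → ℝ} {a f' : ℝ}

theorem HasDerivWithinAt.eventually_lt_of_pos_right (hf : HasDerivWithinAt f f' (Ioi a) a)
    (hpos : 0 < f') : ∀ᶠ x in 𝓝[>] a, f a < f x := by
  have hslope := (hasDerivWithinAt_iff_tendsto_slope' self_notMem_Ioi).mp hf
  filter_upwards [hslope.eventually_const_lt hpos, self_mem_nhdsWithin] with x hx hax
  exact (slope_pos_iff hax).mp hx

theorem HasDerivWithinAt.eventually_lt_of_neg_left (hf : HasDerivWithinAt f f' (Iio a) a)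
    (hneg : f' < 0) : ∀ᶠ x in 𝓝[<] a, f a < f x := by
  have hslope := (hasDerivWithinAt_iff_tendsto_slope' self_notMem_Iio).mp hf
  filter_upwards [hslope.eventually_lt_const hneg, self_mem_nhdsWithin] with x hx hxa
  rwa [slope_def_field, div_lt_iff_of_neg (sub_neg.mpr hxa), zero_mul, sub_pos] at hx

end OneSidedDerivative

noncomputable def pade44Num (z : ℝ) : ℝ := 1680 + 840*z + 180*z^2 + 20*z^3 + z^4

theorem R_GL8_eq_div (z : ℝ) : R_GL8 z = pade44Num z / pade44Num (-z) := by
  unfold R_GL8 pade44Num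
  ring_nf

-- `pade44Num u = (u² + 10u + 30)² + 20((u + 6)² + 3)`
theorem pade44Num_pos (u : ℝ) : 0 < pade44Num u := by
  unfold pade44Num
  nlinarith [sq_nonneg (u^2 + 10*u + 30), sq_nonneg (u + 6)]

theorem hasDerivAt_pade44Num (u : ℝ) :
    HasDerivAt pade44Num (840 + 360*u + 60*u^2 + 4*u^3) u :=
  (((((hasDerivAt_id u).const_mul 840).const_add 1680).add
    ((hasDerivAt_pow 2 u).const_mul 180)).add ((hasDerivAt_pow 3 u).const_mul 20)).add
    (hasDerivAt_pow 4 u) |>.congr_deriv (by push_cast; ring)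

theorem g_GL8_eq (u : ℝ) : g_GL8 u = (1680*u + 40*u^3) / pade44Num u := by
  rw [g_GL8, R_GL8_eq_div, neg_neg, one_sub_div (pade44Num_pos u).ne']
  unfold pade44Num
  ring

theorem hasDerivAt_g_GL8 (u : ℝ) :
    HasDerivAt g_GL8 (((1680 + 120*u^2) * pade44Num u
      - (1680*u + 40*u^3) * (840 + 360*u + 60*u^2 + 4*u^3)) / pade44Num u ^ 2) u := by
  have hodd : HasDerivAt (fun u : ℝ => 1680*u + 40*u^3) (1680 + 120*u^2) u :=
    ((hasDerivAt_id u).const_mul 1680).add ((hasDerivAt_pow 3 u).const_mul 40)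
      |>.congr_deriv (by push_cast; ring)
  rw [show g_GL8 = fun u => (1680*u + 40*u^3) / pade44Num u from funext g_GL8_eq]
  exact hodd.div (hasDerivAt_pade44Num u) (pade44Num_pos u).ne'

/-- `g(0) = 0`, `g′(0) = 1 > 0`, and `g′(30) < 0`; hence both `u = 0` and `u = 30`
are strict local minimizers of `g` relative to `[0,30]`: the discretized problem possesses a
spurious local minimizer at `u = 30` in addition to the correct minimizer `u = 0`. -/
theorem gl8_two_local_minimizers :
    g_GL8 0 = 0 ∧
    HasDerivAt g_GL8 1 0 ∧ (1 : ℝ) > 0 ∧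
    (∃ d : ℝ, HasDerivAt g_GL8 d 30 ∧ d < 0) ∧
    (∀ᶠ u in nhdsWithin 0 (Icc (0:ℝ) 30 \ {0}), g_GL8 0 < g_GL8 u) ∧
    (∀ᶠ u in nhdsWithin 30 (Icc (0:ℝ) 30 \ {30}), g_GL8 30 < g_GL8 u) := by
  have hd0 : HasDerivAt g_GL8 1 0 := (hasDerivAt_g_GL8 0).congr_deriv (by norm_num [pade44Num])
  obtain ⟨d, hd30, hneg⟩ : ∃ d, HasDerivAt g_GL8 d 30 ∧ d < 0 :=
    ⟨_, hasDerivAt_g_GL8 30, by norm_num [pade44Num]⟩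
  refine ⟨by simp [g_GL8_eq], hd0, one_pos, ⟨_, hd30, hneg⟩, ?_, ?_⟩
  · exact (hd0.hasDerivWithinAt.eventually_lt_of_pos_right one_pos).filter_mono
      (nhdsWithin_mono _ fun u hu => lt_of_le_of_ne hu.1.1 (Ne.symm hu.2))
  · exact (hd30.hasDerivWithinAt.eventually_lt_of_neg_left hneg).filter_mono
      (nhdsWithin_mono _ fun u hu => lt_of_le_of_ne hu.1.2 hu.2)
end

section
/- Let R(z) = (1680 + 840z + 180z² + 20z³ + z⁴)/(1680 − 840z + 180z² − 20z³ + z⁴). Then R(−30) > 1/4 while exp(−30) < 10⁻¹³, so |R(−30) − exp(−30)| > 1/4: at the spurious solution u = 30 of the GL8-discretized minimal example, the local integration error of the single integration step exceeds 1/4. -/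
lemma R_val : R_GL8 (-30) = 408480/1538880 := by
  unfold R_GL8; norm_num

lemma exp_small : Real.exp (-30) < 10 ^ (-13 : ℤ) := by
  have h : (2.7182818283 : ℝ) ^ 30 < Real.exp 30 := by
    have := Real.exp_one_gt_d9
    calc (2.7182818283:ℝ)^30 < (Real.exp 1)^30 := by
          exact pow_lt_pow_left₀ (by linarith) (by norm_num) (by norm_num)
      _ = Real.exp 30 := by rw [← Real.exp_nat_mul]; norm_num
  have h2 : (10:ℝ)^(13:ℕ) < Real.exp 30 := by
    nlinarith [h]
  rw [Real.exp_neg]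
  rw [show ((10:ℝ) ^ (-13:ℤ)) = ((10:ℝ)^(13:ℕ))⁻¹ by
    rw [zpow_neg]; norm_num]
  apply inv_strictAnti₀ (by positivity) h2

/-- `R(-30) > 1/4` while `exp(-30) < 10⁻¹³`, so `|R(-30) - exp(-30)| > 1/4`:
at the spurious solution `u = 30` of the GL8-discretized minimal example the local integration
error of the single integration step exceeds `1/4`. -/
theorem gl8_large_integration_error_at_spurious_solution :
    R_GL8 (-30) > 1/4 ∧
    Real.exp (-30) < 10 ^ (-13 : ℤ) ∧
    |R_GL8 (-30) - Real.exp (-30)| > 1/4 := by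
  have hR := R_val
  have he := exp_small
  have he' : (0:ℝ) < Real.exp (-30) := Real.exp_pos _
  refine ⟨by rw [hR]; norm_num, he, ?_⟩
  rw [abs_of_pos (by rw [hR]; norm_num at he ⊢; linarith), hR]
  norm_num at he ⊢; linarith
end

section
/- Let R(z) = (60 + 24z + 3z²)/(60 − 36z + 9z² − z³) and define g(u) = 1 − R(−u) = 1 − (60 − 24u + 3u²)/(60 + 36u + 9u² + u³) for u ∈ [0,30]. Then g(0) = 0 and g(u) > 0 for all u ∈ (0,30], so u = 0 is the unique global minimizer of g on [0,30]; moreover g(20) < g(10) and g(20) < g(30), so g attains a local minimum at some interior point u† ∈ (10,30). Hence the Radau IIA (3-stage) discretization of the minimal example also admits a spurious local minimizer distinct from u = 0. -/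
open Set

/-- Stability function of the 3-stage Radau IIA method. -/
noncomputable def R_Radau3 (z : ℝ) : ℝ :=
  (60 + 24*z + 3*z^2) / (60 - 36*z + 9*z^2 - z^3)

/-- Radau IIA (3-stage) discretized cost of the minimal example. -/
noncomputable def g_Radau3 (u : ℝ) : ℝ :=
  1 - (60 - 24*u + 3*u^2) / (60 + 36*u + 9*u^2 + u^3)

lemma g_pos (u : ℝ) (hu : 0 < u) : 0 < g_Radau3 u := by
  have hD : (0:ℝ) < 60 + 36*u + 9*u^2 + u^3 := by nlinarith
  have : (60 - 24*u + 3*u^2) / (60 + 36*u + 9*u^2 + u^3) < 1 := by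
    rw [div_lt_one hD]; nlinarith
  unfold g_Radau3; linarith

lemma g_cont : ContinuousOn g_Radau3 (Icc (10:ℝ) 30) := by
  apply ContinuousOn.sub continuousOn_const
  apply ContinuousOn.div (by fun_prop) (by fun_prop)
  intro u hu
  have h10 : (10:ℝ) ≤ u := hu.1
  nlinarith [hu.2]

/-- With `R(z) = (60+24z+3z²)/(60-36z+9z²-z³)` and
`g(u) = 1 - R(-u) = 1 - (60-24u+3u²)/(60+36u+9u²+u³)`: `g(0) = 0` and `g(u) > 0` on `(0,30]`,
so `u = 0` is the unique global minimizer of `g` on `[0,30]`; moreover `g(20) < g(10)` and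
`g(20) < g(30)`, so `g` attains a local minimum at an interior point `u† ∈ (10,30)`. Hence the
Radau IIA discretization also admits a spurious local minimizer distinct from `u = 0`. -/
theorem radau3_spurious_local_minimizer :
    (∀ u : ℝ, g_Radau3 u = 1 - R_Radau3 (-u)) ∧
    g_Radau3 0 = 0 ∧
    (∀ u ∈ Ioc (0:ℝ) 30, 0 < g_Radau3 u) ∧
    (∀ u ∈ Icc (0:ℝ) 30, u ≠ 0 → g_Radau3 0 < g_Radau3 u) ∧
    g_Radau3 20 < g_Radau3 10 ∧
    g_Radau3 20 < g_Radau3 30 ∧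
    (∃ u ∈ Ioo (10:ℝ) 30, IsLocalMin g_Radau3 u ∧ u ≠ 0) := by
  have h20_10 : g_Radau3 20 < g_Radau3 10 := by unfold g_Radau3; norm_num
  have h20_30 : g_Radau3 20 < g_Radau3 30 := by unfold g_Radau3; norm_num
  have h0 : g_Radau3 0 = 0 := by unfold g_Radau3; norm_num
  refine ⟨?_, h0, ?_, ?_, h20_10, h20_30, ?_⟩
  · intro u; unfold g_Radau3 R_Radau3; ring_nf
  · exact fun u hu => g_pos u hu.1
  · intro u hu hne
    rw [h0]
    exact g_pos u (lt_of_le_of_ne hu.1 (Ne.symm hne))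
  · obtain ⟨u, hu, hmin⟩ := isCompact_Icc.exists_isMinOn (nonempty_Icc.2 (by norm_num))
      g_cont
    have h20 : (20:ℝ) ∈ Icc (10:ℝ) 30 := by norm_num
    have hu10 : 10 < u := by
      rcases lt_or_eq_of_le hu.1 with h | h
      · exact h
      · exfalso; have := hmin h20; rw [← h] at this; simp only [mem_setOf_eq] at this
        linarith
    have hu30 : u < 30 := by
      rcases lt_or_eq_of_le hu.2 with h | h
      · exact h
      · exfalso; have := hmin h20; rw [h] at this; simp only [mem_setOf_eq] at this
        linarith
    refine ⟨u, ⟨hu10, hu30⟩, hmin.isLocalMin (Icc_mem_nhds hu10 hu30), by linarith⟩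
end
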